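/- arXiv:2411.11149 — 3 statements merged into one kernel-verified Lean document; each statement's English description precedes it below -/
import Mathlib

section
/- The Prime Adjacency Matrix representation is lossless: given two multi-relational graphs on the same vertex set with relation set R and an injective prime assignment φ : R → primes, if their PAMs (where entry (i,j) is the product of primes of all relations connecting i to j, or 0 if none) are equal, then the graphs have the same edge set. -/
lemma pam_aux {R : Type*} [DecidableEq R]
    (φ : R → ℕ) (hφ : Function.Injective φ) (hp : ∀ r, (φ r).Prime)
    (S T : Finset R) (h : ∏ r ∈ S, φ r = ∏ r ∈ T, φ r) : S = T := by
  have key : ∀ (U : Finset R) (r : R), r ∈ U ↔ φ r ∣ ∏ s ∈ U, φ s := by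
    intro U r
    constructor
    · exact fun hr => Finset.dvd_prod_of_mem φ hr
    · intro hd
      obtain ⟨s, hs, hdvd⟩ := (Nat.Prime.prime (hp r)).exists_mem_finset_dvd hd
      have : φ r = φ s := ((Nat.prime_dvd_prime_iff_eq (hp r) (hp s)).mp hdvd)
      rwa [hφ this]
  ext r
  rw [key S r, key T r, h]

/-- The PAM representation is lossless: if two multi-relational graphs on the same
vertex set have equal PAMs (entry `(i,j)` is the product of primes of the relations
connecting `i` to `j`, or `0` if there are none), then they have the same edges. -/
theorem stmt_1 {V R : Type*} [DecidableEq R]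
    (φ : R → ℕ) (hφ : Function.Injective φ) (hp : ∀ r, (φ r).Prime)
    (E₁ E₂ : V → V → Finset R)
    (h : ∀ i j,
      (if (E₁ i j).Nonempty then ∏ r ∈ E₁ i j, φ r else 0) =
      (if (E₂ i j).Nonempty then ∏ r ∈ E₂ i j, φ r else 0)) :
    E₁ = E₂ := by
  funext i j
  have hij := h i j
  have hpos : ∀ U : Finset R, (0 : ℕ) < ∏ r ∈ U, φ r :=
    fun U => Finset.prod_pos (fun r _ => (hp r).pos)
  by_cases h1 : (E₁ i j).Nonempty <;> by_cases h2 : (E₂ i j).Nonempty <;>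
    simp [h1, h2] at hij
  · exact pam_aux φ hφ hp _ _ hij
  · exact absurd hij (hpos _).ne'
  · exact absurd hij.symm (hpos _).ne'
  · rw [Finset.not_nonempty_iff_eq_empty] at h1 h2; rw [h1, h2]
end

section
/- In a simple multi-relational graph, if exactly one 2-hop path connects i to j, say via relations r₁ then r₂, then P²[i,j] = φ(r₁)·φ(r₂), and the unordered pair {r₁, r₂} is recoverable from the prime factorization of P²[i,j]. -/
/-- In a simple multi-relational graph, if exactly one 2-hop path connects `i` to
`j`, via relations `r₁` then `r₂`, then `P²[i,j] = φ r₁ * φ r₂`, and the unordered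
pair `{r₁, r₂}` is recoverable from the prime factorization of `P²[i,j]`. -/
theorem stmt_5 {V R : Type*} [Fintype V] [DecidableEq V]
    (φ : R → ℕ) (hφ : Function.Injective φ) (hp : ∀ r, (φ r).Prime)
    (e : V → V → Option R)
    (P : Matrix V V ℤ)
    (hP : ∀ i j, P i j = match e i j with
      | some r => (φ r : ℤ)
      | none => 0)
    (i j m : V) (r₁ r₂ : R)
    (hpath : e i m = some r₁ ∧ e m j = some r₂)
    (huniq : ∀ (m' : V) (r₁' r₂' : R),
      e i m' = some r₁' → e m' j = some r₂' → m' = m ∧ r₁' = r₁ ∧ r₂' = r₂) :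
    (P * P) i j = (φ r₁ : ℤ) * (φ r₂ : ℤ) ∧
      ∀ s t : R, φ s * φ t = φ r₁ * φ r₂ →
        ({s, t} : Multiset R) = ({r₁, r₂} : Multiset R) := by
  obtain ⟨h1, h2⟩ := hpath
  constructor
  · rw [Matrix.mul_apply]
    rw [Finset.sum_eq_single m]
    · rw [hP, hP, h1, h2]
    · intro k _ hk
      rw [hP, hP]
      cases hik : e i k with
      | none => simp
      | some a =>
        cases hkj : e k j with
        | none => simp
        | some b =>
          exact absurd (huniq k a b hik hkj).1 hk
    · intro h; exact absurd (Finset.mem_univ m) h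
  · intro s t hst
    have hs : φ s ∣ φ r₁ * φ r₂ := ⟨φ t, hst.symm⟩
    rcases ((hp s).prime.2.2 _ _ hs) with h | h
    · have hsr : s = r₁ := hφ (((Nat.prime_dvd_prime_iff_eq (hp s) (hp r₁)).1 h))
      subst hsr
      have ht : t = r₂ := hφ (Nat.eq_of_mul_eq_mul_left (hp s).pos
        (by rw [hst]))
      rw [ht]
    · have hsr : s = r₂ := hφ (((Nat.prime_dvd_prime_iff_eq (hp s) (hp r₂)).1 h))
      subst hsr
      have ht : t = r₁ := by
        apply hφ
        have : φ s * φ t = φ s * φ r₁ := by rw [hst]; ring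
        exact Nat.eq_of_mul_eq_mul_left (hp s).pos this
      rw [ht]
      exact Multiset.pair_comm _ _
end

section
/- The lossless chaining step is correct: if P^k[i,m] is the product of distinct primes φ_k(p) over all k-hop paths p from i to m, and P[m,j] is the product of φ_1(r) over relations r from m to j, then factorizing both values and concatenating each recovered k-hop path with each recovered relation yields exactly the set of (k+1)-hop paths from i to j passing through m at step k. -/
lemma mem_primeFactors_prod_iff {A : Type*} [DecidableEq A] (φ : A → ℕ)
    (hφ : Function.Injective φ) (hp : ∀ a, (φ a).Prime) (S : Finset A) (x : A) :
    φ x ∈ (∏ a ∈ S, φ a).primeFactors ↔ x ∈ S := by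
  constructor
  · intro h
    rw [Nat.mem_primeFactors] at h
    obtain ⟨hprime, hdvd, -⟩ := h
    obtain ⟨a, ha, hax⟩ := (Nat.Prime.prime hprime).exists_mem_finset_dvd hdvd
    have : φ x = φ a := (Nat.prime_dvd_prime_iff_eq hprime (hp a)).mp hax
    rwa [hφ this]
  · intro hx
    rw [Nat.mem_primeFactors]
    exact ⟨hp x, Finset.dvd_prod_of_mem φ hx,
      Finset.prod_ne_zero_iff.mpr fun a _ => (hp a).pos.ne'⟩

/-- Correctness of the lossless chaining step: if `P^k[i,m]` is the squarefree
product of the distinct primes `φk c` over the set `Ck` of relational chains of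
`k`-hop paths from `i` to `m`, and `P[m,j]` is the product of `φ₁ r` over the set
`D` of relations from `m` to `j`, then factorizing both values and concatenating
each recovered chain with each recovered relation yields exactly the chains of the
`(k+1)`-hop paths from `i` to `j` through `m`. -/
theorem stmt_10 {R : Type*} [DecidableEq R] (k : ℕ)
    (φ₁ : R → ℕ) (hφ₁ : Function.Injective φ₁) (hp₁ : ∀ r, (φ₁ r).Prime)
    (φk : (Fin k → R) → ℕ) (hφk : Function.Injective φk)
    (hpk : ∀ c, (φk c).Prime)
    (Ck : Finset (Fin k → R)) (D : Finset R) :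
    ∀ c' : Fin (k + 1) → R,
      (∃ c ∈ Ck, ∃ r ∈ D, c' = Fin.snoc c r) ↔
      (φk (Fin.init c') ∈ (∏ c ∈ Ck, φk c).primeFactors ∧
       φ₁ (c' (Fin.last k)) ∈ (∏ r ∈ D, φ₁ r).primeFactors) := by
  intro c'
  rw [mem_primeFactors_prod_iff φk hφk hpk, mem_primeFactors_prod_iff φ₁ hφ₁ hp₁]
  constructor
  · rintro ⟨c, hc, r, hr, rfl⟩
    simp [Fin.init_snoc, Fin.snoc_last, hc, hr]
  · rintro ⟨h1, h2⟩
    exact ⟨_, h1, _, h2, (Fin.snoc_init_self c').symm⟩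
end
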